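/- arXiv:2108.11664 — 2 statements merged into one kernel-verified Lean document; each statement's English description precedes it below -/
import Mathlib

section
/- Let D be the diagonal 3×3 real matrix diag(-1,-1,2). Then for every t ≠ 0, the matrix exp(tD) = diag(e^{-t}, e^{-t}, e^{2t}) is not conjugate in GL(3,ℝ) to any matrix with integer entries and determinant 1 (i.e., to any element of SL(3,ℤ)). -/
/-!
Statement 1: for the diagonal matrix D = diag(-1,-1,2) and every t ≠ 0, the matrix
exp(tD) = diag(e^{-t}, e^{-t}, e^{2t}) is not conjugate in GL(3,ℝ) to any integer
matrix of determinant 1 (i.e. to any element of SL(3,ℤ)).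
-/

open Matrix

/-- From `2x³ + 1 = 3x²` and `x > 0` it follows that `x = 1`. -/
lemma expD_aux_cube_eq (x : ℝ) (hx : 0 < x) (h : 2*x^3 + 1 = 3 * x^2) : x = 1 := by
  have h2 : (x - 1)^2 * (2*x + 1) = 0 := by linear_combination h
  have h3 : (2*x + 1) > 0 := by linarith
  have h4 : (x-1)^2 = 0 := by
    rcases mul_eq_zero.mp h2 with h | h
    · exact h
    · linarith
  have := pow_eq_zero_iff (n := 2) (by norm_num) |>.mp h4
  linarith

/-- Key arithmetic lemma: if `x > 0` satisfies `2x³+1 = m x²` and `x³+2 = k x`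
with `m k : ℤ`, then `x = 1`. -/
lemma expD_aux_key (x : ℝ) (hx : 0 < x) (m k : ℤ)
    (hm : 2*x^3 + 1 = (m:ℝ) * x^2) (hk : x^3 + 2 = (k:ℝ) * x) : x = 1 := by
  have hmpos : 0 < (m:ℝ) := by nlinarith [pow_pos hx 2, pow_pos hx 3]
  have hmZ : 0 < m := by exact_mod_cast hmpos
  have hE : x * ((m:ℝ)^2*(k:ℝ) - 4*(k:ℝ)^2 + 3*(m:ℝ)) = 2*(m:ℝ)^2 - 6*(k:ℝ) := by
    linear_combination (-((m:ℝ)*x+2*(k:ℝ)))*hm + (2*(m:ℝ)*x + 4*(k:ℝ) - (m:ℝ)^2)*hk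
  by_cases hC : m^2*k - 4*k^2 + 3*m = 0
  · -- degenerate case: m = k = 3
    have hCR : ((m:ℝ)^2*(k:ℝ) - 4*(k:ℝ)^2 + 3*(m:ℝ)) = 0 := by exact_mod_cast hC
    have hR : (2*(m:ℝ)^2 - 6*(k:ℝ)) = 0 := by rw [← hE, hCR]; ring
    have hRZ : 2*m^2 - 6*k = 0 := by exact_mod_cast hR
    have hk3 : m^2 = 3*k := by linarith
    have hkm : k^2 = 3*m := by nlinarith [hC, hk3]
    have hm4 : m*(m^3 - 27) = 0 := by nlinarith [hk3, hkm]
    have hm3 : m = 3 := by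
      rcases mul_eq_zero.mp hm4 with h | h
      · omega
      · nlinarith [sq_nonneg (m-3), sq_nonneg (m+3), sq_nonneg m]
    have hk3' : k = 3 := by rw [hm3] at hk3; norm_num at hk3; omega
    rw [hm3] at hm; push_cast at hm
    exact expD_aux_cube_eq x hx (by linarith)
  · -- x is rational
    have hCR : ((m:ℝ)^2*(k:ℝ) - 4*(k:ℝ)^2 + 3*(m:ℝ)) ≠ 0 := by
      intro h; exact hC (by exact_mod_cast h)
    have hCQ : ((m:ℚ)^2*(k:ℚ) - 4*(k:ℚ)^2 + 3*(m:ℚ)) ≠ 0 := by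
      intro h; exact hC (by exact_mod_cast h)
    set r : ℚ := (2*(m:ℚ)^2 - 6*(k:ℚ)) / ((m:ℚ)^2*(k:ℚ) - 4*(k:ℚ)^2 + 3*(m:ℚ)) with hrdef
    have hxq : x = (r:ℝ) := by
      rw [hrdef]
      push_cast
      field_simp
      rw [eq_div_iff (by intro h; apply hCR; linear_combination h)]
      linear_combination hE
    have hkq : r^3 + 2 = (k:ℚ) * r := by
      have : ((r^3 + 2 : ℚ) : ℝ) = (((k:ℚ) * r : ℚ) : ℝ) := by
        push_cast
        rw [← hxq]
        exact hk
      exact_mod_cast this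
    -- rational root theorem by hand
    set a : ℤ := r.num with hadef
    set b : ℤ := (r.den : ℤ) with hbdef
    have hb0 : (0:ℤ) < b := by rw [hbdef]; exact_mod_cast r.pos
    have h1 : a ^ 3 + 2 * b^3 = k * a * b^2 := by
      have hd : (b : ℚ) ≠ 0 := by exact_mod_cast ne_of_gt hb0
      have hr' : (r : ℚ) = (a : ℚ) / (b : ℚ) := by
        rw [hadef, hbdef]; push_cast; exact (Rat.num_div_den r).symm
      rw [hr'] at hkq
      field_simp at hkq
      have h1' : (a ^ 3 + 2 * b^3) * b = k * a * b^3 := by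
        have h0 : a ^ 3 + b ^ 3 * 2 = a * b ^ 2 * k := by exact_mod_cast hkq
        linear_combination b * h0
      apply mul_right_cancel₀ (ne_of_gt hb0)
      linear_combination h1'
    have hbdvd : b ∣ a ^ 3 := ⟨k * a * b - 2 * b^2, by linear_combination h1⟩
    have hcop : Nat.Coprime r.den a.natAbs := (r.reduced).symm
    have hden1 : r.den = 1 := by
      have hdvdn : r.den ∣ a.natAbs ^ 3 := by
        have := Int.natAbs_dvd_natAbs.mpr hbdvd
        simpa [hbdef, Int.natAbs_pow] using this
      exact Nat.Coprime.eq_one_of_dvd (hcop.pow_right 3) hdvdn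
    have hra : (r:ℝ) = (a:ℝ) := by
      conv_lhs => rw [← Rat.num_div_den r]
      rw [hden1]; push_cast; ring
    have hxa : x = (a:ℝ) := by rw [hxq, hra]
    have hapos : 0 < a := by exact_mod_cast hxa ▸ hx
    have hmZ' : 2*a^3 + 1 = m * a^2 := by
      rw [hxa] at hm
      exact_mod_cast hm
    have hdvd : a^2 ∣ 1 := ⟨m - 2*a, by linear_combination hmZ'⟩
    have ha1 : a = 1 := by
      have := Int.le_of_dvd one_pos hdvd
      nlinarith [hapos]
    rw [hxa, ha1]; norm_num

theorem expD_not_conjugate_to_SL3Z (t : ℝ) (ht : t ≠ 0) :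
    ¬ ∃ (P : GL (Fin 3) ℝ) (B : Matrix (Fin 3) (Fin 3) ℤ),
        B.det = 1 ∧
        (P : Matrix (Fin 3) (Fin 3) ℝ) *
            Matrix.diagonal ![Real.exp (-t), Real.exp (-t), Real.exp (2 * t)] *
            ((P⁻¹ : GL (Fin 3) ℝ) : Matrix (Fin 3) (Fin 3) ℝ)
          = B.map ((↑) : ℤ → ℝ) := by
  rintro ⟨P, B, hB, h⟩
  set v : Fin 3 → ℝ := ![Real.exp (-t), Real.exp (-t), Real.exp (2 * t)] with hv
  have hPP : ((P⁻¹ : GL (Fin 3) ℝ) : Matrix (Fin 3) (Fin 3) ℝ) * (P : Matrix (Fin 3) (Fin 3) ℝ) = 1 := by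
    exact_mod_cast P.inv_mul
  -- trace equation
  have htr : Matrix.trace (B.map ((↑) : ℤ → ℝ)) = Matrix.trace (Matrix.diagonal v) := by
    rw [← h, Matrix.trace_mul_cycle, hPP, Matrix.one_mul]
  have htrB : Matrix.trace (B.map ((↑) : ℤ → ℝ)) = ((Matrix.trace B : ℤ) : ℝ) := by
    simp [Matrix.trace, Matrix.diag, Matrix.map_apply]
  -- adjugate trace equation
  have hadj : Matrix.trace (Matrix.adjugate (B.map ((↑) : ℤ → ℝ)))
      = Matrix.trace (Matrix.adjugate (Matrix.diagonal v)) := by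
    rw [← h, Matrix.adjugate_mul_distrib, Matrix.adjugate_mul_distrib,
      ← Matrix.mul_assoc, Matrix.trace_mul_cycle, ← Matrix.adjugate_mul_distrib, hPP,
      Matrix.adjugate_one, Matrix.one_mul]
  have hadjB : Matrix.trace (Matrix.adjugate (B.map ((↑) : ℤ → ℝ)))
      = ((Matrix.trace (Matrix.adjugate B) : ℤ) : ℝ) := by
    rw [show (B.map ((↑) : ℤ → ℝ)) = (Int.castRingHom ℝ).mapMatrix B from rfl,
      ← RingHom.map_adjugate]
    simp [Matrix.trace, Matrix.diag, Matrix.map_apply]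
  -- compute diagonal side
  have hde : Matrix.trace (Matrix.diagonal v) = Real.exp (-t) + Real.exp (-t) + Real.exp (2*t) := by
    simp [Matrix.trace_diagonal, Fin.sum_univ_three, hv]
  have hda : Matrix.trace (Matrix.adjugate (Matrix.diagonal v)) =
      Real.exp (-t) * Real.exp (2*t) + Real.exp (-t) * Real.exp (2*t)
        + Real.exp (-t) * Real.exp (-t) := by
    rw [Matrix.adjugate_diagonal, Matrix.trace_diagonal]
    rw [Fin.sum_univ_three]
    have e0 : (Finset.univ.erase (0 : Fin 3)) = {1, 2} := by decide
    have e1 : (Finset.univ.erase (1 : Fin 3)) = {0, 2} := by decide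
    have e2 : (Finset.univ.erase (2 : Fin 3)) = {0, 1} := by decide
    rw [e0, e1, e2]
    simp [hv, Finset.prod_insert, Finset.prod_singleton]
    try ring
  -- assemble the real equations
  set x : ℝ := Real.exp (-t) with hxdef
  have hxpos : 0 < x := Real.exp_pos _
  have hx2 : Real.exp (2*t) * x^2 = 1 := by
    rw [hxdef, pow_two, ← Real.exp_add, ← Real.exp_add,
      show 2*t + (-t + -t) = 0 by ring, Real.exp_zero]
  set m : ℤ := Matrix.trace B with hmdef
  set k : ℤ := Matrix.trace (Matrix.adjugate B) with hkdef
  have hmr : (m:ℝ) = x + x + Real.exp (2*t) := by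
    rw [hmdef, ← htrB, htr, hde]
  have hkr : (k:ℝ) = x * Real.exp (2*t) + x * Real.exp (2*t) + x * x := by
    rw [hkdef, ← hadjB, hadj, hda]
  have hm : 2*x^3 + 1 = (m:ℝ) * x^2 := by
    rw [hmr]; nlinarith [hx2]
  have hk : x^3 + 2 = (k:ℝ) * x := by
    rw [hkr]; nlinarith [hx2]
  have hx1 : x = 1 := expD_aux_key x hxpos m k hm hk
  have hexp : Real.exp (-t) = Real.exp 0 := by
    rw [Real.exp_zero]; exact hxdef ▸ hx1
  have : -t = 0 := Real.exp_injective hexp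
  exact ht (by linarith)
end

section
/- Let 𝔰 = 𝔤₅,₃₀^{-4/3} ⊕ ℝ with structure equations (-e²⁴ - (2/3)e¹⁵, -e³⁴ + (1/3)e²⁵, (4/3)e³⁵, -e⁴⁵, 0, 0), and basis e₁,…,e₆ dual to e¹,…,e⁶. Every derivation D of 𝔰 has matrix (in the basis e₁,…,e₆) of the form: D e₁ = a₁e₁, De₂ = a₂e₁ + a₅e₂, De₃ = a₂e₂ + (2a₅-a₁)e₃, De₄ = a₃e₁ + a₆e₂ + (a₁-a₅)e₄, De₅ = a₄e₁ - (1/3)a₃e₂ - (4/3)a₆e₃ - a₂e₄ + a₇e₆, De₆ = a₈e₆, for some a₁,…,a₈ ∈ ℝ; i.e. the space of derivations of 𝔰 is 8-dimensional of this form. -/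
set_option maxHeartbeats 40000000


/-!
Statement 5: the derivations of 𝔰 = 𝔤₅,₃₀^{-4/3} ⊕ ℝ (structure equations
(-e²⁴ - (2/3)e¹⁵, -e³⁴ + (1/3)e²⁵, (4/3)e³⁵, -e⁴⁵, 0, 0)) are exactly the linear maps
of the 8-parameter form given in the paper.
-/

noncomputable section

abbrev V6 := Fin 6 → ℝ

def e6 (i : Fin 6) : V6 := Pi.single i 1

/-- Lie bracket of `𝔤₅,₃₀^{-4/3} ⊕ ℝ`:
`[e₂,e₄]=e₁`, `[e₁,e₅]=(2/3)e₁`, `[e₃,e₄]=e₂`, `[e₂,e₅]=-(1/3)e₂`,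
`[e₃,e₅]=-(4/3)e₃`, `[e₄,e₅]=e₄`. -/
def br530 : V6 → V6 → V6 := fun x y =>
  ((x 1 * y 3 - x 3 * y 1) + (2 / 3) * (x 0 * y 4 - x 4 * y 0)) • e6 0
    + ((x 2 * y 3 - x 3 * y 2) - (1 / 3) * (x 1 * y 4 - x 4 * y 1)) • e6 1
    + (-(4 / 3) * (x 2 * y 4 - x 4 * y 2)) • e6 2
    + (x 3 * y 4 - x 4 * y 3) • e6 3

lemma expand6 (z : V6) : z = z 0 • e6 0 + z 1 • e6 1 + z 2 • e6 2 + z 3 • e6 3 + z 4 • e6 4 + z 5 • e6 5 := by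
  funext k; fin_cases k <;> simp [e6, Pi.single_apply]

lemma Dapp (D : V6 →ₗ[ℝ] V6) (z : V6) (k : Fin 6) :
    D z k = z 0 * D (e6 0) k + z 1 * D (e6 1) k + z 2 * D (e6 2) k
      + z 3 * D (e6 3) k + z 4 * D (e6 4) k + z 5 * D (e6 5) k := by
  conv_lhs => rw [expand6 z]
  simp [Pi.add_apply]


theorem derivations_g530 (D : V6 →ₗ[ℝ] V6) :
    (∀ x y : V6, D (br530 x y) = br530 (D x) y + br530 x (D y)) ↔
      ∃ a : Fin 8 → ℝ,
        D (e6 0) = a 0 • e6 0 ∧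
        D (e6 1) = a 1 • e6 0 + a 4 • e6 1 ∧
        D (e6 2) = a 1 • e6 1 + (2 * a 4 - a 0) • e6 2 ∧
        D (e6 3) = a 2 • e6 0 + a 5 • e6 1 + (a 0 - a 4) • e6 3 ∧
        D (e6 4) = a 3 • e6 0 + (-(1 / 3) * a 2) • e6 1 + (-(4 / 3) * a 5) • e6 2
            + (-(a 1)) • e6 3 + a 6 • e6 5 ∧
        D (e6 5) = a 7 • e6 5 := by
  constructor
  · intro h
    have h01 : ∀ k, D (br530 (e6 0) (e6 1)) k = (br530 (D (e6 0)) (e6 1) + br530 (e6 0) (D (e6 1))) k :=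
      fun k => congrFun (h (e6 0) (e6 1)) k
    conv at h01 => ext k; rw [Dapp]
    simp [br530, e6, Pi.single_apply] at h01
    have h01_0 := h01 0
    have h01_1 := h01 1
    simp at h01_0 h01_1
    have h02 : ∀ k, D (br530 (e6 0) (e6 2)) k = (br530 (D (e6 0)) (e6 2) + br530 (e6 0) (D (e6 2))) k :=
      fun k => congrFun (h (e6 0) (e6 2)) k
    conv at h02 => ext k; rw [Dapp]
    simp [br530, e6, Pi.single_apply] at h02
    have h02_0 := h02 0
    have h02_1 := h02 1
    have h02_2 := h02 2
    simp at h02_0 h02_1 h02_2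
    have h03 : ∀ k, D (br530 (e6 0) (e6 3)) k = (br530 (D (e6 0)) (e6 3) + br530 (e6 0) (D (e6 3))) k :=
      fun k => congrFun (h (e6 0) (e6 3)) k
    conv at h03 => ext k; rw [Dapp]
    simp [br530, e6, Pi.single_apply] at h03
    have h03_0 := h03 0
    have h03_1 := h03 1
    have h03_3 := h03 3
    simp at h03_0 h03_1 h03_3
    have h04 : ∀ k, D (br530 (e6 0) (e6 4)) k = (br530 (D (e6 0)) (e6 4) + br530 (e6 0) (D (e6 4))) k :=
      fun k => congrFun (h (e6 0) (e6 4)) k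
    conv at h04 => ext k; rw [Dapp]
    simp [br530, e6, Pi.single_apply] at h04
    have h04_0 := h04 0
    have h04_1 := h04 1
    have h04_2 := h04 2
    have h04_3 := h04 3
    have h04_4 := h04 4
    have h04_5 := h04 5
    simp at h04_0 h04_1 h04_2 h04_3 h04_4 h04_5
    have h12 : ∀ k, D (br530 (e6 1) (e6 2)) k = (br530 (D (e6 1)) (e6 2) + br530 (e6 1) (D (e6 2))) k :=
      fun k => congrFun (h (e6 1) (e6 2)) k
    conv at h12 => ext k; rw [Dapp]
    simp [br530, e6, Pi.single_apply] at h12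
    have h12_0 := h12 0
    have h12_1 := h12 1
    have h12_2 := h12 2
    simp at h12_0 h12_1 h12_2
    have h13 : ∀ k, D (br530 (e6 1) (e6 3)) k = (br530 (D (e6 1)) (e6 3) + br530 (e6 1) (D (e6 3))) k :=
      fun k => congrFun (h (e6 1) (e6 3)) k
    conv at h13 => ext k; rw [Dapp]
    simp [br530, e6, Pi.single_apply] at h13
    have h13_0 := h13 0
    have h13_1 := h13 1
    have h13_2 := h13 2
    have h13_3 := h13 3
    have h13_4 := h13 4
    have h13_5 := h13 5
    simp at h13_0 h13_1 h13_2 h13_3 h13_4 h13_5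
    have h14 : ∀ k, D (br530 (e6 1) (e6 4)) k = (br530 (D (e6 1)) (e6 4) + br530 (e6 1) (D (e6 4))) k :=
      fun k => congrFun (h (e6 1) (e6 4)) k
    conv at h14 => ext k; rw [Dapp]
    simp [br530, e6, Pi.single_apply] at h14
    have h14_0 := h14 0
    have h14_1 := h14 1
    have h14_2 := h14 2
    have h14_3 := h14 3
    have h14_4 := h14 4
    have h14_5 := h14 5
    simp at h14_0 h14_1 h14_2 h14_3 h14_4 h14_5
    have h23 : ∀ k, D (br530 (e6 2) (e6 3)) k = (br530 (D (e6 2)) (e6 3) + br530 (e6 2) (D (e6 3))) k :=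
      fun k => congrFun (h (e6 2) (e6 3)) k
    conv at h23 => ext k; rw [Dapp]
    simp [br530, e6, Pi.single_apply] at h23
    have h23_0 := h23 0
    have h23_1 := h23 1
    have h23_2 := h23 2
    have h23_3 := h23 3
    have h23_4 := h23 4
    have h23_5 := h23 5
    simp at h23_0 h23_1 h23_2 h23_3 h23_4 h23_5
    have h24 : ∀ k, D (br530 (e6 2) (e6 4)) k = (br530 (D (e6 2)) (e6 4) + br530 (e6 2) (D (e6 4))) k :=
      fun k => congrFun (h (e6 2) (e6 4)) k
    conv at h24 => ext k; rw [Dapp]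
    simp [br530, e6, Pi.single_apply] at h24
    have h24_0 := h24 0
    have h24_1 := h24 1
    have h24_2 := h24 2
    have h24_3 := h24 3
    have h24_4 := h24 4
    have h24_5 := h24 5
    simp at h24_0 h24_1 h24_2 h24_3 h24_4 h24_5
    have h34 : ∀ k, D (br530 (e6 3) (e6 4)) k = (br530 (D (e6 3)) (e6 4) + br530 (e6 3) (D (e6 4))) k :=
      fun k => congrFun (h (e6 3) (e6 4)) k
    conv at h34 => ext k; rw [Dapp]
    simp [br530, e6, Pi.single_apply] at h34
    have h34_0 := h34 0
    have h34_1 := h34 1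
    have h34_2 := h34 2
    have h34_3 := h34 3
    have h34_4 := h34 4
    have h34_5 := h34 5
    simp at h34_0 h34_1 h34_2 h34_3 h34_4 h34_5
    have h05 : ∀ k, D (br530 (e6 0) (e6 5)) k = (br530 (D (e6 0)) (e6 5) + br530 (e6 0) (D (e6 5))) k :=
      fun k => congrFun (h (e6 0) (e6 5)) k
    conv at h05 => ext k; rw [Dapp]
    simp [br530, e6, Pi.single_apply] at h05
    have h05_0 := h05
    have h15 : ∀ k, D (br530 (e6 1) (e6 5)) k = (br530 (D (e6 1)) (e6 5) + br530 (e6 1) (D (e6 5))) k :=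
      fun k => congrFun (h (e6 1) (e6 5)) k
    conv at h15 => ext k; rw [Dapp]
    simp [br530, e6, Pi.single_apply] at h15
    have h15_0 := h15 0
    have h15_1 := h15 1
    simp at h15_0 h15_1
    have h25 : ∀ k, D (br530 (e6 2) (e6 5)) k = (br530 (D (e6 2)) (e6 5) + br530 (e6 2) (D (e6 5))) k :=
      fun k => congrFun (h (e6 2) (e6 5)) k
    conv at h25 => ext k; rw [Dapp]
    simp [br530, e6, Pi.single_apply] at h25
    have h25_1 := h25 1
    have h25_2 := h25 2
    simp at h25_1 h25_2
    have h35 : ∀ k, D (br530 (e6 3) (e6 5)) k = (br530 (D (e6 3)) (e6 5) + br530 (e6 3) (D (e6 5))) k :=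
      fun k => congrFun (h (e6 3) (e6 5)) k
    conv at h35 => ext k; rw [Dapp]
    simp [br530, e6, Pi.single_apply] at h35
    have h35_0 := h35 0
    have h35_1 := h35 1
    have h35_3 := h35 3
    simp at h35_0 h35_1 h35_3
    have h45 : ∀ k, D (br530 (e6 4) (e6 5)) k = (br530 (D (e6 4)) (e6 5) + br530 (e6 4) (D (e6 5))) k :=
      fun k => congrFun (h (e6 4) (e6 5)) k
    conv at h45 => ext k; rw [Dapp]
    simp [br530, e6, Pi.single_apply] at h45
    have h45_0 := h45 0
    have h45_1 := h45 1
    have h45_2 := h45 2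
    have h45_3 := h45 3
    simp at h45_0 h45_1 h45_2 h45_3
    have hv0 : (![D ((Pi.single 0 1 : V6)) 0, D ((Pi.single 1 1 : V6)) 0, D ((Pi.single 3 1 : V6)) 0, D ((Pi.single 4 1 : V6)) 0, D ((Pi.single 1 1 : V6)) 1, D ((Pi.single 3 1 : V6)) 1, D ((Pi.single 4 1 : V6)) 5, D ((Pi.single 5 1 : V6)) 5] : Fin 8 → ℝ) 0 = D ((Pi.single 0 1 : V6)) 0 := rfl
    have hv1 : (![D ((Pi.single 0 1 : V6)) 0, D ((Pi.single 1 1 : V6)) 0, D ((Pi.single 3 1 : V6)) 0, D ((Pi.single 4 1 : V6)) 0, D ((Pi.single 1 1 : V6)) 1, D ((Pi.single 3 1 : V6)) 1, D ((Pi.single 4 1 : V6)) 5, D ((Pi.single 5 1 : V6)) 5] : Fin 8 → ℝ) 1 = D ((Pi.single 1 1 : V6)) 0 := rfl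
    have hv2 : (![D ((Pi.single 0 1 : V6)) 0, D ((Pi.single 1 1 : V6)) 0, D ((Pi.single 3 1 : V6)) 0, D ((Pi.single 4 1 : V6)) 0, D ((Pi.single 1 1 : V6)) 1, D ((Pi.single 3 1 : V6)) 1, D ((Pi.single 4 1 : V6)) 5, D ((Pi.single 5 1 : V6)) 5] : Fin 8 → ℝ) 2 = D ((Pi.single 3 1 : V6)) 0 := rfl
    have hv3 : (![D ((Pi.single 0 1 : V6)) 0, D ((Pi.single 1 1 : V6)) 0, D ((Pi.single 3 1 : V6)) 0, D ((Pi.single 4 1 : V6)) 0, D ((Pi.single 1 1 : V6)) 1, D ((Pi.single 3 1 : V6)) 1, D ((Pi.single 4 1 : V6)) 5, D ((Pi.single 5 1 : V6)) 5] : Fin 8 → ℝ) 3 = D ((Pi.single 4 1 : V6)) 0 := rfl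
    have hv4 : (![D ((Pi.single 0 1 : V6)) 0, D ((Pi.single 1 1 : V6)) 0, D ((Pi.single 3 1 : V6)) 0, D ((Pi.single 4 1 : V6)) 0, D ((Pi.single 1 1 : V6)) 1, D ((Pi.single 3 1 : V6)) 1, D ((Pi.single 4 1 : V6)) 5, D ((Pi.single 5 1 : V6)) 5] : Fin 8 → ℝ) 4 = D ((Pi.single 1 1 : V6)) 1 := rfl
    have hv5 : (![D ((Pi.single 0 1 : V6)) 0, D ((Pi.single 1 1 : V6)) 0, D ((Pi.single 3 1 : V6)) 0, D ((Pi.single 4 1 : V6)) 0, D ((Pi.single 1 1 : V6)) 1, D ((Pi.single 3 1 : V6)) 1, D ((Pi.single 4 1 : V6)) 5, D ((Pi.single 5 1 : V6)) 5] : Fin 8 → ℝ) 5 = D ((Pi.single 3 1 : V6)) 1 := rfl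
    have hv6 : (![D ((Pi.single 0 1 : V6)) 0, D ((Pi.single 1 1 : V6)) 0, D ((Pi.single 3 1 : V6)) 0, D ((Pi.single 4 1 : V6)) 0, D ((Pi.single 1 1 : V6)) 1, D ((Pi.single 3 1 : V6)) 1, D ((Pi.single 4 1 : V6)) 5, D ((Pi.single 5 1 : V6)) 5] : Fin 8 → ℝ) 6 = D ((Pi.single 4 1 : V6)) 5 := rfl
    have hv7 : (![D ((Pi.single 0 1 : V6)) 0, D ((Pi.single 1 1 : V6)) 0, D ((Pi.single 3 1 : V6)) 0, D ((Pi.single 4 1 : V6)) 0, D ((Pi.single 1 1 : V6)) 1, D ((Pi.single 3 1 : V6)) 1, D ((Pi.single 4 1 : V6)) 5, D ((Pi.single 5 1 : V6)) 5] : Fin 8 → ℝ) 7 = D ((Pi.single 5 1 : V6)) 5 := rfl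
    refine ⟨![D (e6 0) 0, D (e6 1) 0, D (e6 3) 0, D (e6 4) 0, D (e6 1) 1, D (e6 3) 1, D (e6 4) 5, D (e6 5) 5], ?_, ?_, ?_, ?_, ?_, ?_⟩ <;>
      funext k <;> fin_cases k <;>
        simp [e6, Pi.single_apply, hv0, hv1, hv2, hv3, hv4, hv5, hv6, hv7] <;>
        linarith [h01_0, h01_1, h02_0, h02_1, h02_2, h03_0, h03_1, h03_3, h04_0, h04_1, h04_2, h04_3, h04_4, h04_5, h12_0, h12_1, h12_2, h13_0, h13_1, h13_2, h13_3, h13_4, h13_5, h14_0, h14_1, h14_2, h14_3, h14_4, h14_5, h23_0, h23_1, h23_2, h23_3, h23_4, h23_5, h24_0, h24_1, h24_2, h24_3, h24_4, h24_5, h34_0, h34_1, h34_2, h34_3, h34_4, h34_5, h05_0, h15_0, h15_1, h25_1, h25_2, h35_0, h35_1, h35_3, h45_0, h45_1, h45_2, h45_3]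
  · rintro ⟨a, h0, h1, h2, h3, h4, h5⟩
    intro x y
    have key : ∀ z : V6, D z = z 0 • D (e6 0) + z 1 • D (e6 1) + z 2 • D (e6 2)
        + z 3 • D (e6 3) + z 4 • D (e6 4) + z 5 • D (e6 5) := by
      intro z; conv_lhs => rw [expand6 z]
      simp
    rw [key (br530 x y), key x, key y]
    simp only [h0, h1, h2, h3, h4, h5]
    funext k
    fin_cases k <;>
      simp [br530, e6, Pi.single_apply, Pi.add_apply, Pi.smul_apply, mul_comm] <;> ring

end
end
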